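/- Combining the previous two facts: if A_clᵀ H A_cl ⪯ H, K_wᵀ S K_w ⪯ λ H with λ > 0, and λ x₀ᵀ H x₀ ≤ β, then for all k ∈ ℕ the vector wₖ := K_w A_cl^k x₀ satisfies wₖᵀ S wₖ ≤ β, i.e., x₀ lies in the set X = {x : K_w A_cl^k x ∈ W̄ for all k} where W̄ = {w : wᵀ S w ≤ β}. -/

import Mathlib

/-!
The quadratic form `V(x) = xᵀ H x` is a Lyapunov function for `x ↦ A_cl x`: `H - A_clᵀ H A_cl ⪰ 0`
says exactly that `V(A_cl x) ≤ V(x)`, so `V` does not increase along the trajectory `A_clᵏ x₀`.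
The S-procedure bound `K_wᵀ S K_w ⪯ λ H` then gives `wₖᵀ S wₖ ≤ λ V(A_clᵏ x₀) ≤ λ V(x₀) ≤ β`.
-/

open Matrix

namespace Matrix

section QuadraticForm

variable {R m n : Type*} [Fintype m] [Fintype n]

theorem dotProduct_transpose_mul_mul_mulVec [CommSemiring R] (B : Matrix m n R)
    (M : Matrix m m R) (x : n → R) :
    x ⬝ᵥ (Bᵀ * M * B) *ᵥ x = B *ᵥ x ⬝ᵥ M *ᵥ (B *ᵥ x) := by
  rw [Matrix.mul_assoc, ← mulVec_mulVec, ← mulVec_mulVec, dotProduct_mulVec, vecMul_transpose]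

variable [CommRing R] [PartialOrder R] [IsOrderedRing R] [StarRing R] [TrivialStar R]

theorem PosSemidef.dotProduct_mulVec_le_of_sub {M N : Matrix n n R} (h : (M - N).PosSemidef)
    (x : n → R) : x ⬝ᵥ N *ᵥ x ≤ x ⬝ᵥ M *ᵥ x := by
  have := h.dotProduct_mulVec_nonneg x
  rwa [star_trivial, sub_mulVec, dotProduct_sub, sub_nonneg] at this

theorem dotProduct_pow_mulVec_le_of_posSemidef_sub [DecidableEq n] {A H : Matrix n n R}
    (hdiss : (H - Aᵀ * H * A).PosSemidef) (k : ℕ) (x : n → R) :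
    A ^ k *ᵥ x ⬝ᵥ H *ᵥ (A ^ k *ᵥ x) ≤ x ⬝ᵥ H *ᵥ x := by
  induction k with
  | zero => simp
  | succ k ih =>
    calc A ^ (k + 1) *ᵥ x ⬝ᵥ H *ᵥ (A ^ (k + 1) *ᵥ x)
        = A ^ k *ᵥ x ⬝ᵥ (Aᵀ * H * A) *ᵥ (A ^ k *ᵥ x) := by
          rw [dotProduct_transpose_mul_mul_mulVec, pow_succ', ← mulVec_mulVec]
      _ ≤ A ^ k *ᵥ x ⬝ᵥ H *ᵥ (A ^ k *ᵥ x) := hdiss.dotProduct_mulVec_le_of_sub _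
      _ ≤ x ⬝ᵥ H *ᵥ x := ih

end QuadraticForm

end Matrix

theorem stmt15_general {n l : ℕ}
    (Acl H : Matrix (Fin n) (Fin n) ℝ)
    (S : Matrix (Fin l) (Fin l) ℝ)
    (Kw : Matrix (Fin l) (Fin n) ℝ) (β lam : ℝ) (hlam : 0 < lam)
    (hdiss : (H - Aclᵀ * H * Acl).PosSemidef)
    (hLMI : (lam • H - Kwᵀ * S * Kw).PosSemidef)
    (x₀ : Fin n → ℝ) (hx₀ : lam * (x₀ ⬝ᵥ H.mulVec x₀) ≤ β) :
    x₀ ∈ {x : Fin n → ℝ | ∀ k : ℕ,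
      Kw.mulVec ((Acl ^ k).mulVec x) ∈ {w : Fin l → ℝ | w ⬝ᵥ S.mulVec w ≤ β}} := by
  intro k
  set z := Acl ^ k *ᵥ x₀
  calc Kw *ᵥ z ⬝ᵥ S *ᵥ (Kw *ᵥ z) = z ⬝ᵥ (Kwᵀ * S * Kw) *ᵥ z :=
        (dotProduct_transpose_mul_mul_mulVec Kw S z).symm
    _ ≤ z ⬝ᵥ (lam • H) *ᵥ z := hLMI.dotProduct_mulVec_le_of_sub z
    _ = lam * (z ⬝ᵥ H *ᵥ z) := by rw [smul_mulVec, dotProduct_smul, smul_eq_mul]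
    _ ≤ lam * (x₀ ⬝ᵥ H *ᵥ x₀) := by
        gcongr
        exact dotProduct_pow_mulVec_le_of_posSemidef_sub hdiss k x₀
    _ ≤ β := hx₀

/-- Combining dissipation invariance with the S-procedure: if `A_clᵀHA_cl ⪯ H`,
`K_wᵀSK_w ⪯ λH` with `λ > 0`, and `λ x₀ᵀHx₀ ≤ β`, then `wₖ := K_w A_clᵏ x₀` satisfies
`wₖᵀSwₖ ≤ β` for all `k`; i.e. `x₀ ∈ X = {x : K_w A_clᵏ x ∈ W̄ ∀k}`, `W̄ = {w : wᵀSw ≤ β}`. -/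
theorem stmt15 {n l : ℕ}
    (Acl H : Matrix (Fin n) (Fin n) ℝ) (hH : H.PosSemidef)
    (S : Matrix (Fin l) (Fin l) ℝ) (hS : S.IsSymm)
    (Kw : Matrix (Fin l) (Fin n) ℝ) (β lam : ℝ) (hβ : 0 < β) (hlam : 0 < lam)
    (hdiss : (H - Aclᵀ * H * Acl).PosSemidef)
    (hLMI : (lam • H - Kwᵀ * S * Kw).PosSemidef)
    (x₀ : Fin n → ℝ) (hx₀ : lam * (x₀ ⬝ᵥ H.mulVec x₀) ≤ β) :
    x₀ ∈ {x : Fin n → ℝ | ∀ k : ℕ,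
      Kw.mulVec ((Acl ^ k).mulVec x) ∈ {w : Fin l → ℝ | w ⬝ᵥ S.mulVec w ≤ β}} :=
  stmt15_general Acl H S Kw β lam hlam hdiss hLMI x₀ hx₀
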